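/- arXiv:1401.2707 — 2 statements merged into one kernel-verified Lean document; each statement's English description precedes it below -/
import Mathlib

section
/- For integers n and m with 1 ≤ m and 2m ≤ n, the number of simple graphs on the vertex set {1,…,n} having exactly m connected components, each of which is a path on at least 2 vertices, equals C(n−m−1, m−1) · n!/(m!·2^m), where C(·,·) is the binomial coefficient. -/
/-- The connected component `c` of `G` is a path on at least 2 vertices: its vertices can
be listed as `v₁,…,v_ℓ` (`ℓ ≥ 2`) with the adjacencies among them exactly
`{v_i, v_{i+1}}` for `1 ≤ i < ℓ`. -/
def IsPathComponent {V : Type*} (G : SimpleGraph V) (c : G.ConnectedComponent) : Prop :=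
  ∃ (ℓ : ℕ) (v : Fin ℓ → V), 2 ≤ ℓ ∧ Function.Injective v ∧ Set.range v = c.supp ∧
    ∀ a b : Fin ℓ, G.Adj (v a) (v b) ↔ ((a : ℕ) + 1 = b ∨ (b : ℕ) + 1 = a)

/-- `G` has exactly `m` connected components, each of which is a path on at least 2
vertices. -/
def PathsGraph {n : ℕ} (G : SimpleGraph (Fin n)) (m : ℕ) : Prop :=
  Nat.card G.ConnectedComponent = m ∧ ∀ c : G.ConnectedComponent, IsPathComponent G c

/-!
Label the vertices of a disjoint union of `m` paths on `γ₁, …, γₘ ≥ 2` vertices bijectively by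
`Fin n`, where `γ` is a composition of `n`: there are `C(n - m - 1, m - 1) · n!` such labelled
path forests. Every graph with `m` path components arises from exactly `m! · 2^m` of them, one for
each ordering of its components and each choice of a starting endpoint on every component, since
a path is determined by its starting vertex.
-/

open Finset
open scoped Nat

abbrev CompositionGeTwo (n m : ℕ) : Type := {c : Fin m → ℕ // (∀ i, 2 ≤ c i) ∧ ∑ i, c i = n}

instance (n m : ℕ) : Finite (CompositionGeTwo n m) :=
  have : Finite {c : Fin m → ℕ // ∑ i, c i = n} := .of_equiv _ (Sym.equivNatSumOfFintype _ n)
  .of_injective (fun c => (⟨c.1, c.2.2⟩ : {c : Fin m → ℕ // ∑ i, c i = n}))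
    fun _ _ h => Subtype.ext (Subtype.mk.inj h)

theorem card_compositionGeTwo {n m : ℕ} (hm : 1 ≤ m) (hmn : 2 * m ≤ n) :
    Nat.card (CompositionGeTwo n m) = (n - m - 1).choose (m - 1) := by
  -- subtracting `2` from every part leaves a composition of `n - 2m` into `m` parts allowed to
  -- vanish, which stars and bars counts
  have hsum (d : Fin m → ℕ) : ∑ i, (d i + 2) = ∑ i, d i + 2 * m := by
    simp [sum_add_distrib, mul_comm]
  let e : CompositionGeTwo n m ≃ {d : Fin m → ℕ // ∑ i, d i = n - 2 * m} :=
    { toFun c := ⟨fun i => c.1 i - 2, by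
        show ∑ i, (c.1 i - 2) = n - 2 * m
        have := hsum fun i => c.1 i - 2
        simp only [Nat.sub_add_cancel (c.2.1 _), c.2.2] at this
        omega⟩
      invFun d := ⟨fun i => d.1 i + 2, fun _ => Nat.le_add_left _ _, by rw [hsum, d.2]; omega⟩
      left_inv c := Subtype.ext (funext fun i => Nat.sub_add_cancel (c.2.1 i))
      right_inv d := Subtype.ext (funext fun i => Nat.add_sub_cancel _ _) }
  rw [Nat.card_congr (e.trans (Sym.equivNatSumOfFintype _ _).symm), Sym.natCard_sym_eq_choose,
    Nat.card_fin, show m + (n - 2 * m) - 1 = n - m - 1 by omega]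
  exact Nat.choose_symm_of_eq_add (by omega)

theorem Nat.card_eq_card_mul_of_card_fiber {α β : Type*} [Finite α] [Finite β] (f : α → β)
    {k : ℕ} (hf : ∀ b, Nat.card {a // f a = b} = k) : Nat.card α = Nat.card β * k := by
  have := Fintype.ofFinite β
  rw [← Nat.card_congr (Equiv.sigmaFiberEquiv f), Nat.card_sigma, sum_congr rfl fun b _ => hf b,
    sum_const, Finset.card_univ, smul_eq_mul, Nat.card_eq_fintype_card]

namespace SimpleGraph

variable {ι V : Type*}

section PathEnumeration

variable {G : SimpleGraph V} {C : G.ConnectedComponent}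

structure IsPathEnumeration (G : SimpleGraph V) (C : G.ConnectedComponent) {ℓ : ℕ}
    (v : Fin ℓ → V) : Prop where
  two_le : 2 ≤ ℓ
  injective : Function.Injective v
  range_eq : Set.range v = C.supp
  adj_iff : ∀ a b, G.Adj (v a) (v b) ↔ (a : ℕ) + 1 = b ∨ (b : ℕ) + 1 = a

theorem isPathComponent_iff :
    IsPathComponent G C ↔ ∃ (ℓ : ℕ) (v : Fin ℓ → V), G.IsPathEnumeration C v :=
  ⟨fun ⟨ℓ, v, h₁, h₂, h₃, h₄⟩ => ⟨ℓ, v, h₁, h₂, h₃, h₄⟩,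
    fun ⟨ℓ, v, h₁, h₂, h₃, h₄⟩ => ⟨ℓ, v, h₁, h₂, h₃, h₄⟩⟩

namespace IsPathEnumeration

variable {ℓ : ℕ} {v v' : Fin ℓ → V}

theorem pos (h : G.IsPathEnumeration C v) : 0 < ℓ :=
  Nat.zero_lt_of_lt h.two_le

theorem connectedComponentMk_eq (h : G.IsPathEnumeration C v) (a : Fin ℓ) :
    G.connectedComponentMk (v a) = C :=
  (h.range_eq ▸ Set.mem_range_self a : v a ∈ C.supp)

theorem mem_range_of_adj (h : G.IsPathEnumeration C v) {a : Fin ℓ} {x : V} (hx : G.Adj x (v a)) :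
    x ∈ Set.range v := by
  rw [h.range_eq, ConnectedComponent.mem_supp_iff, ← h.connectedComponentMk_eq a]
  exact ConnectedComponent.sound hx.reachable

theorem length_eq (h : G.IsPathEnumeration C v) : ℓ = Nat.card C.supp := by
  rw [← h.range_eq, Nat.card_range_of_injective h.injective, Nat.card_fin]

theorem comp_rev (h : G.IsPathEnumeration C v) : G.IsPathEnumeration C (v ∘ Fin.rev) where
  two_le := h.two_le
  injective := h.injective.comp Fin.rev_injective
  range_eq := by rw [Fin.rev_surjective.range_comp, h.range_eq]
  adj_iff a b := by
    rw [Function.comp_apply, Function.comp_apply, h.adj_iff, Fin.val_rev, Fin.val_rev]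
    omega

/-- Each next vertex is the neighbour of the current one that has not been visited yet. -/
theorem eq_of_apply_zero_eq (h : G.IsPathEnumeration C v) (h' : G.IsPathEnumeration C v')
    (h₀ : v' ⟨0, h.pos⟩ = v ⟨0, h.pos⟩) : v' = v := by
  funext ⟨k, hk⟩
  induction k using Nat.strong_induction_on with
  | _ k ih =>
  match k, hk, ih with
  | 0, _, _ => exact h₀
  | j + 1, hk, ih =>
    have hadj : G.Adj (v ⟨j, by omega⟩) (v' ⟨j + 1, hk⟩) := by
      rw [← ih j (by omega) (by omega)]
      exact (h'.adj_iff _ _).2 (Or.inl rfl)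
    obtain ⟨t, ht⟩ := h.mem_range_of_adj hadj.symm
    rw [← ht] at hadj ⊢
    rcases (h.adj_iff _ _).1 hadj with htj | htj
    · exact congrArg v (Fin.ext htj.symm)
    · simp only at htj
      have hback : v' ⟨j - 1, by omega⟩ = v t := by
        rw [ih (j - 1) (by omega) (by omega)]
        exact congrArg v (Fin.ext (by simp only; omega))
      have := congrArg Fin.val (h'.injective (hback.trans ht))
      simp only at this
      omega

theorem eq_of_adj_apply_zero (h : G.IsPathEnumeration C v) {x y : V}
    (hx : G.Adj x (v ⟨0, h.pos⟩)) (hy : G.Adj y (v ⟨0, h.pos⟩)) : x = y := by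
  obtain ⟨a, rfl⟩ := h.mem_range_of_adj hx
  obtain ⟨b, rfl⟩ := h.mem_range_of_adj hy
  have ha := (h.adj_iff _ _).1 hx
  have hb := (h.adj_iff _ _).1 hy
  exact congrArg v (Fin.ext (by simp only at ha hb; omega))

/-- The endpoints are the only vertices with a single neighbour. -/
theorem apply_zero_eq_or (h : G.IsPathEnumeration C v) (h' : G.IsPathEnumeration C v') :
    v' ⟨0, h.pos⟩ = v ⟨0, h.pos⟩ ∨ v' ⟨0, h.pos⟩ = v (Fin.rev ⟨0, h.pos⟩) := by
  obtain ⟨t, ht⟩ : v' ⟨0, h.pos⟩ ∈ Set.range v := h.range_eq ▸ h'.connectedComponentMk_eq _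
  rw [← ht]
  by_cases h0 : (t : ℕ) = 0
  · exact Or.inl (congrArg v (Fin.ext h0))
  by_cases hl : (t : ℕ) = ℓ - 1
  · exact Or.inr (congrArg v (Fin.ext (by simp [hl])))
  exfalso
  have hprev : G.Adj (v ⟨t - 1, by omega⟩) (v' ⟨0, h.pos⟩) :=
    ht ▸ (h.adj_iff _ _).2 (Or.inl (by simp only; omega))
  have hnext : G.Adj (v ⟨t + 1, by omega⟩) (v' ⟨0, h.pos⟩) :=
    ht ▸ (h.adj_iff _ _).2 (Or.inr rfl)
  have := congrArg Fin.val (h.injective (h'.eq_of_adj_apply_zero hprev hnext))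
  simp only at this
  omega

end IsPathEnumeration

def PathEnumeration (G : SimpleGraph V) (C : G.ConnectedComponent) : Type _ :=
  {p : Σ ℓ, Fin ℓ → V // G.IsPathEnumeration C p.2}

theorem card_pathEnumeration (hC : IsPathComponent G C) : Nat.card (G.PathEnumeration C) = 2 := by
  obtain ⟨ℓ, v, h⟩ := isPathComponent_iff.1 hC
  refine (Nat.card_eq_two_iff' (⟨⟨ℓ, v⟩, h⟩ : G.PathEnumeration C)).2
    ⟨⟨⟨ℓ, v ∘ Fin.rev⟩, h.comp_rev⟩, fun hrev => ?_, ?_⟩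
  · have hv : v ∘ Fin.rev = v := eq_of_heq (Sigma.mk.inj_iff.1 (Subtype.mk.inj hrev)).2
    have h₀ := congrArg Fin.val (h.injective (congrFun hv ⟨0, h.pos⟩))
    have := h.two_le
    simp only [Fin.val_rev] at h₀
    omega
  · rintro ⟨⟨ℓ', v'⟩, h'⟩ hne
    obtain rfl : ℓ' = ℓ := h'.length_eq.trans h.length_eq.symm
    rcases h.apply_zero_eq_or h' with h₀ | h₀
    · exact (hne (Subtype.ext (congrArg (Sigma.mk _) (h.eq_of_apply_zero_eq h' h₀)))).elim
    · exact Subtype.ext (congrArg (Sigma.mk _) (h.comp_rev.eq_of_apply_zero_eq h' h₀))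

end PathEnumeration

section PathForest

def pathForest (ℓ : ι → ℕ) : SimpleGraph (Σ i, Fin (ℓ i)) where
  Adj x y := x.1 = y.1 ∧ ((x.2 : ℕ) + 1 = y.2 ∨ (y.2 : ℕ) + 1 = x.2)
  symm := ⟨fun _ _ h => ⟨h.1.symm, h.2.symm⟩⟩
  loopless := ⟨fun _ h => by omega⟩

variable {ℓ : ι → ℕ}

theorem pathForest_adj {x y : Σ i, Fin (ℓ i)} :
    (pathForest ℓ).Adj x y ↔ x.1 = y.1 ∧ ((x.2 : ℕ) + 1 = y.2 ∨ (y.2 : ℕ) + 1 = x.2) :=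
  Iff.rfl

theorem pathForest_reachable_iff {x y : Σ i, Fin (ℓ i)} :
    (pathForest ℓ).Reachable x y ↔ x.1 = y.1 := by
  constructor
  · rintro ⟨w⟩
    induction w with
    | nil => rfl
    | cons hadj _ ih => exact (pathForest_adj.1 hadj).1.trans ih
  · obtain ⟨i, a⟩ := x
    obtain ⟨j, b⟩ := y
    rintro (rfl : i = j)
    let incl : pathGraph (ℓ i) →g pathForest ℓ :=
      ⟨fun c => ⟨i, c⟩, fun h => pathForest_adj.2 ⟨rfl, pathGraph_adj.1 h⟩⟩
    exact (pathGraph_preconnected _ a b).map incl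

variable (Ψ : (Σ i, Fin (ℓ i)) ≃ V)

theorem map_pathForest_reachable_iff {x y : Σ i, Fin (ℓ i)} :
    ((pathForest ℓ).map Ψ.toEmbedding).Reachable (Ψ x) (Ψ y) ↔ x.1 = y.1 :=
  (Iso.map Ψ (pathForest ℓ)).reachable_iff.trans pathForest_reachable_iff

theorem isPathEnumeration_map_pathForest {i : ι} (h : 2 ≤ ℓ i) (a : Fin (ℓ i)) :
    ((pathForest ℓ).map Ψ.toEmbedding).IsPathEnumeration
      (connectedComponentMk _ (Ψ ⟨i, a⟩)) (fun b => Ψ ⟨i, b⟩) where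
  two_le := h
  injective := Ψ.injective.comp sigma_mk_injective
  range_eq := by
    ext y
    obtain ⟨⟨j, b⟩, rfl⟩ := Ψ.surjective y
    rw [ConnectedComponent.mem_supp_iff, ConnectedComponent.eq, map_pathForest_reachable_iff]
    exact ⟨fun ⟨c, hc⟩ => by cases Ψ.injective hc; rfl, by rintro rfl; exact ⟨b, rfl⟩⟩
  adj_iff b c := by
    rw [← Equiv.coe_toEmbedding, map_adj_apply, pathForest_adj]
    exact and_iff_right rfl

theorem bijective_connectedComponentMk_map_pathForest (a : ∀ i, Fin (ℓ i)) :
    Function.Bijective fun i =>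
      ((pathForest ℓ).map Ψ.toEmbedding).connectedComponentMk (Ψ ⟨i, a i⟩) := by
  refine ⟨fun i j hij => ?_, fun C => ?_⟩
  · exact (map_pathForest_reachable_iff Ψ).1 (ConnectedComponent.exact hij)
  · obtain ⟨x, rfl⟩ := C.exists_rep
    obtain ⟨⟨i, b⟩, rfl⟩ := Ψ.surjective x
    exact ⟨i, ConnectedComponent.sound ((map_pathForest_reachable_iff Ψ).2 rfl)⟩

theorem card_connectedComponent_map_pathForest (hℓ : ∀ i, 0 < ℓ i) :
    Nat.card ((pathForest ℓ).map Ψ.toEmbedding).ConnectedComponent = Nat.card ι :=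
  (Nat.card_eq_of_bijective _
    (bijective_connectedComponentMk_map_pathForest Ψ fun i => ⟨0, hℓ i⟩)).symm

theorem isPathComponent_map_pathForest (hℓ : ∀ i, 2 ≤ ℓ i)
    (C : ((pathForest ℓ).map Ψ.toEmbedding).ConnectedComponent) :
    IsPathComponent ((pathForest ℓ).map Ψ.toEmbedding) C := by
  obtain ⟨x, rfl⟩ := C.exists_rep
  obtain ⟨⟨i, a⟩, rfl⟩ := Ψ.surjective x
  exact isPathComponent_iff.2 ⟨_, _, isPathEnumeration_map_pathForest Ψ (hℓ i) a⟩

end PathForest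

section Assemble

variable {G : SimpleGraph V} (E : ι ≃ G.ConnectedComponent) {ℓ : ι → ℕ}
  {v : ∀ i, Fin (ℓ i) → V}

theorem bijective_sigma_of_isPathEnumeration (h : ∀ i, G.IsPathEnumeration (E i) (v i)) :
    Function.Bijective fun x : Σ i, Fin (ℓ i) => v x.1 x.2 := by
  refine ⟨fun ⟨i, a⟩ ⟨j, b⟩ hab => ?_, fun x => ?_⟩
  · obtain rfl : i = j := E.injective <| by
      rw [← (h i).connectedComponentMk_eq a, ← (h j).connectedComponentMk_eq b]
      exact congrArg _ hab
    exact congrArg (Sigma.mk i) ((h i).injective hab)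
  · obtain ⟨i, hi⟩ := E.surjective (G.connectedComponentMk x)
    obtain ⟨a, ha⟩ : x ∈ Set.range (v i) := (h i).range_eq ▸ hi.symm
    exact ⟨⟨i, a⟩, ha⟩

theorem map_pathForest_eq_of_isPathEnumeration (h : ∀ i, G.IsPathEnumeration (E i) (v i)) :
    (pathForest ℓ).map (Equiv.ofBijective _ (bijective_sigma_of_isPathEnumeration E h)).toEmbedding
      = G := by
  set Ψ := Equiv.ofBijective _ (bijective_sigma_of_isPathEnumeration E h)
  ext x y
  obtain ⟨⟨i, a⟩, rfl⟩ := Ψ.surjective x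
  obtain ⟨⟨j, b⟩, rfl⟩ := Ψ.surjective y
  rw [← Equiv.coe_toEmbedding, map_adj_apply, pathForest_adj]
  change _ ↔ G.Adj (v i a) (v j b)
  by_cases hij : i = j
  · subst hij
    rw [(h i).adj_iff]
    exact and_iff_right rfl
  · refine ⟨fun hadj => (hij hadj.1).elim, fun hadj => (hij (E.injective ?_)).elim⟩
    rw [← (h i).connectedComponentMk_eq a, ← (h j).connectedComponentMk_eq b]
    exact ConnectedComponent.sound hadj.reachable

end Assemble

section Labelling

variable {n m : ℕ} {G : SimpleGraph V}

def PathForestLabelling (n m : ℕ) (G : SimpleGraph V) : Type _ :=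
  {p : Σ γ : CompositionGeTwo n m, ((Σ i, Fin (γ.1 i)) ≃ V) //
    (pathForest p.1.1).map p.2.toEmbedding = G}

def ComponentEnumeration (m : ℕ) (G : SimpleGraph V) : Type _ :=
  Σ E : Fin m ≃ G.ConnectedComponent,
    {f : Fin m → Σ ℓ, Fin ℓ → V // ∀ i, G.IsPathEnumeration (E i) (f i).2}

theorem card_componentEnumeration [Finite V] (hG : Nat.card G.ConnectedComponent = m)
    (hpath : ∀ C, IsPathComponent G C) : Nat.card (ComponentEnumeration m G) = m ! * 2 ^ m := by
  classical
  have := Fintype.ofFinite G.ConnectedComponent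
  have hE (E : Fin m ≃ G.ConnectedComponent) :
      Nat.card {f : Fin m → Σ ℓ, Fin ℓ → V // ∀ i, G.IsPathEnumeration (E i) (f i).2} = 2 ^ m :=
    calc _ = ∏ i, Nat.card (G.PathEnumeration (E i)) :=
          (Nat.card_congr Equiv.subtypePiEquivPi).trans Nat.card_pi
      _ = 2 ^ m := by simp [card_pathEnumeration (hpath _)]
  have := fun E => Nat.finite_of_card_ne_zero ((hE E).trans_ne (by positivity))
  obtain ⟨e⟩ := Finite.card_eq.1 (hG.trans (Nat.card_fin m).symm)
  rw [ComponentEnumeration, Nat.card_sigma, sum_congr rfl fun E _ => hE E, sum_const,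
    Finset.card_univ, Fintype.card_equiv e.symm, Fintype.card_fin, smul_eq_mul]

namespace PathForestLabelling

noncomputable def toComponentEnumeration (p : PathForestLabelling n m G) :
    ComponentEnumeration m G :=
  ⟨Equiv.ofBijective
      (fun i => G.connectedComponentMk (p.1.2 ⟨i, ⟨0, by have := p.1.1.2.1 i; omega⟩⟩))
      (by obtain ⟨p, rfl⟩ := p; exact bijective_connectedComponentMk_map_pathForest _ _),
    ⟨fun i => ⟨p.1.1.1 i, fun a => p.1.2 ⟨i, a⟩⟩,
      fun i => by obtain ⟨p, rfl⟩ := p; exact isPathEnumeration_map_pathForest _ (p.1.2.1 i) _⟩⟩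

theorem toComponentEnumeration_injective :
    Function.Injective (toComponentEnumeration (n := n) (m := m) (G := G)) := by
  rintro ⟨⟨⟨γ, _⟩, Ψ⟩, _⟩ ⟨⟨⟨γ', _⟩, Ψ'⟩, _⟩ h
  have hpaths := congrArg (fun t => t.2.1) h
  simp only [toComponentEnumeration] at hpaths
  obtain rfl : γ = γ' := funext fun i => congrArg Sigma.fst (congrFun hpaths i)
  obtain rfl : Ψ = Ψ' := Equiv.ext fun ⟨i, a⟩ =>
    congrFun (eq_of_heq (Sigma.mk.inj_iff.1 (congrFun hpaths i)).2) a
  rfl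

theorem toComponentEnumeration_surjective (hV : Nat.card V = n) :
    Function.Surjective (toComponentEnumeration (n := n) (m := m) (G := G)) := by
  rintro ⟨E, f, hf⟩
  have hbij := bijective_sigma_of_isPathEnumeration E hf
  have hsum : ∑ i, (f i).1 = n := by
    rw [← hV, ← Nat.card_eq_of_bijective _ hbij, Nat.card_sigma]
    simp
  refine ⟨⟨⟨⟨fun i => (f i).1, fun i => (hf i).two_le, hsum⟩, Equiv.ofBijective _ hbij⟩,
    map_pathForest_eq_of_isPathEnumeration E hf⟩, ?_⟩
  exact Sigma.subtype_ext (Equiv.ext fun i => (hf i).connectedComponentMk_eq _) rfl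

end PathForestLabelling

theorem card_pathForestLabelling [Finite V] (hV : Nat.card V = n)
    (hG : Nat.card G.ConnectedComponent = m) (hpath : ∀ C, IsPathComponent G C) :
    Nat.card (PathForestLabelling n m G) = m ! * 2 ^ m := by
  rw [Nat.card_eq_of_bijective _ ⟨PathForestLabelling.toComponentEnumeration_injective,
    PathForestLabelling.toComponentEnumeration_surjective hV⟩, card_componentEnumeration hG hpath]

end Labelling

end SimpleGraph

open SimpleGraph

theorem card_sigma_fin_equiv {n m : ℕ} (γ : CompositionGeTwo n m) :
    Nat.card ((Σ i, Fin (γ.1 i)) ≃ Fin n) = n ! := by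
  let e := finSigmaFinEquiv.trans (finCongr γ.2.2)
  rw [← Nat.card_congr ((Equiv.refl _).equivCongr e), Nat.card_perm, Nat.card_congr e, Nat.card_fin]

theorem pathsGraph_map_pathForest {n m : ℕ}
    (p : Σ γ : CompositionGeTwo n m, ((Σ i, Fin (γ.1 i)) ≃ Fin n)) :
    PathsGraph ((pathForest p.1.1).map p.2.toEmbedding) m :=
  ⟨(card_connectedComponent_map_pathForest _ fun i => by have := p.1.2.1 i; omega).trans
      (Nat.card_fin m),
    isPathComponent_map_pathForest _ p.1.2.1⟩

theorem card_pathsGraph_mul (n m : ℕ) :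
    Nat.card {G : SimpleGraph (Fin n) // PathsGraph G m} * (m ! * 2 ^ m) =
      Nat.card (CompositionGeTwo n m) * n ! := by
  have := Fintype.ofFinite (CompositionGeTwo n m)
  let f (p : Σ γ : CompositionGeTwo n m, ((Σ i, Fin (γ.1 i)) ≃ Fin n)) :
      {G : SimpleGraph (Fin n) // PathsGraph G m} :=
    ⟨_, pathsGraph_map_pathForest p⟩
  have hfiber (G : {G : SimpleGraph (Fin n) // PathsGraph G m}) :
      Nat.card {p // f p = G} = m ! * 2 ^ m :=
    (Nat.card_congr (Equiv.subtypeEquivRight fun _ => Subtype.ext_iff)).trans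
      (card_pathForestLabelling (Nat.card_fin n) G.2.1 G.2.2)
  rw [← Nat.card_eq_card_mul_of_card_fiber f hfiber, Nat.card_sigma,
    sum_congr rfl fun γ _ => card_sigma_fin_equiv γ, sum_const, Finset.card_univ, smul_eq_mul,
    Nat.card_eq_fintype_card]

/-- The number of simple graphs on `{1,…,n}` with exactly `m` components, each a path on
at least 2 vertices, equals `C(n−m−1, m−1) · n!/(m!·2^m)`. -/
theorem stmt9 (n m : ℕ) (hm : 1 ≤ m) (hmn : 2 * m ≤ n) :
    (Nat.card {G : SimpleGraph (Fin n) // PathsGraph G m} : ℚ) =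
      ((n - m - 1).choose (m - 1) : ℚ) * (n.factorial : ℚ) /
        ((m.factorial : ℚ) * 2 ^ m) := by
  have key := card_pathsGraph_mul n m
  rw [card_compositionGeTwo hm hmn] at key
  rw [eq_div_iff (by positivity)]
  exact_mod_cast key
end

section
/- Fix 0 < δ < δ′ < 1 and α > 0. There exists K such that for all integers n, all k ≥ K, and all m, the following holds: if S is a collection of m vertex-disjoint paths on n vertices in total that is δ-normal (with respect to k), and S′ is any subcollection of the paths of S with |S′| = m′ ≥ m − n·k^{−α}, then S′ is δ′-normal (with respect to k). -/
/-!
Let `m = |S|`, `m' = |S'|` and `M = (log log k) / 8`. The tail condition `p_ℓ ≤ ℓ⁻⁴` for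
`ℓ ≥ M` bounds the average path length by `M + 3`, so `n ≤ (M + 3) m` and at most a fraction
`η = (M + 3) k^{-α}` of the paths is deleted. Then every frequency moves by at most
`m / m' - 1 ≤ 2η`, and tail frequencies grow by at most the factor `m / m'`. Both losses are
absorbed by the gap between the tolerances: with `q = (2 - δ') / (2 - δ) < 1` we have
`ε_ℓ(δ) = q^ℓ ε_ℓ(δ')` and `γ_ℓ(δ) = q^ℓ γ_ℓ(δ')`, while `ε_ℓ(δ') ≥ (M⁴ (log k)^{1/4})⁻¹` for
`ℓ ≤ M` because `2^M ≤ (log k)^{1/8}`; and `2η` is eventually below that, being polylogarithmic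
in `k` times `k^{-α}`.
-/

/-- A finite indexed collection of paths (given by its multiset of path lengths
`x j`, `j ∈ s`) is `δ`-normal with respect to `k`: with `p_ℓ` the fraction of paths of
length `ℓ`, `M = (1/8)·log log k`, `ε_ℓ(δ) = (ℓ⁴(2−δ)^ℓ (log k)^{1/8})⁻¹` and
`γ_ℓ(δ) = (ℓ⁴(2−δ)^ℓ)⁻¹`, we require `p₁ = 0`, `|p_ℓ − 2^{1−ℓ}| ≤ ε_ℓ(δ)` for
`2 ≤ ℓ ≤ M`, and `p_ℓ ≤ γ_ℓ(δ)` for `ℓ ≥ M`. -/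
def DeltaNormal (k : ℕ) (δ : ℝ) {ι : Type*} (s : Finset ι) (x : ι → ℕ) : Prop :=
  let p : ℕ → ℝ := fun ℓ => ((s.filter fun j => x j = ℓ).card : ℝ) / s.card
  p 1 = 0 ∧
  (∀ ℓ : ℕ, 2 ≤ ℓ → (ℓ : ℝ) ≤ Real.log (Real.log k) / 8 →
    |p ℓ - (2 : ℝ) ^ (1 - (ℓ : ℤ))| ≤
      ((ℓ : ℝ) ^ 4 * (2 - δ) ^ ℓ * Real.log k ^ ((1 : ℝ) / 8))⁻¹) ∧
  (∀ ℓ : ℕ, Real.log (Real.log k) / 8 ≤ (ℓ : ℝ) →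
    p ℓ ≤ ((ℓ : ℝ) ^ 4 * (2 - δ) ^ ℓ)⁻¹)

open Finset Filter Real

section LengthFreq

variable {ι : Type*} (s : Finset ι) (x : ι → ℕ)

noncomputable def lengthFreq (ℓ : ℕ) : ℝ := (#{j ∈ s | x j = ℓ} : ℝ) / #s

theorem deltaNormal_iff (k : ℕ) (δ : ℝ) :
    DeltaNormal k δ s x ↔ lengthFreq s x 1 = 0 ∧
      (∀ ℓ : ℕ, 2 ≤ ℓ → (ℓ : ℝ) ≤ log (log k) / 8 →
        |lengthFreq s x ℓ - (2 : ℝ) ^ (1 - (ℓ : ℤ))| ≤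
          ((ℓ : ℝ) ^ 4 * (2 - δ) ^ ℓ * log k ^ ((1 : ℝ) / 8))⁻¹) ∧
      (∀ ℓ : ℕ, log (log k) / 8 ≤ (ℓ : ℝ) → lengthFreq s x ℓ ≤ ((ℓ : ℝ) ^ 4 * (2 - δ) ^ ℓ)⁻¹) :=
  Iff.rfl

variable {s x}

theorem lengthFreq_eq_zero_of_subset {A : Finset ι} (hA : A ⊆ s) {ℓ : ℕ}
    (h : lengthFreq s x ℓ = 0) : lengthFreq A x ℓ = 0 := by
  rcases div_eq_zero_iff.mp h with hc | hs
  · have hc0 : #{j ∈ s | x j = ℓ} = 0 := by exact_mod_cast hc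
    have : #{j ∈ A | x j = ℓ} = 0 :=
      Nat.eq_zero_of_le_zero (hc0 ▸ card_le_card (filter_subset_filter _ hA))
    simp [lengthFreq, this]
  · have : A = ∅ := subset_empty.mp (card_eq_zero.mp (by exact_mod_cast hs) ▸ hA)
    simp [lengthFreq, this]

theorem lengthFreq_le_of_subset {A : Finset ι} (hA : A ⊆ s) (ℓ : ℕ) :
    lengthFreq A x ℓ ≤ #s / #A * lengthFreq s x ℓ := by
  rcases A.eq_empty_or_nonempty with rfl | hA0
  · simp [lengthFreq]
  have hs : (0 : ℝ) < #s := by exact_mod_cast hA0.mono hA |>.card_pos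
  rw [lengthFreq, lengthFreq, div_mul_div_comm, mul_comm (#s : ℝ), ← div_mul_div_comm,
    div_self hs.ne', mul_one]
  gcongr

theorem abs_lengthFreq_sub_le_of_subset {A : Finset ι} (hA : A ⊆ s) (hA0 : A.Nonempty)
    (ℓ : ℕ) : |lengthFreq A x ℓ - lengthFreq s x ℓ| ≤ #s / #A - 1 := by
  classical
  have ha : (0 : ℝ) < #A := by exact_mod_cast hA0.card_pos
  have hm : (#A : ℝ) ≤ #s := by exact_mod_cast card_le_card hA
  have hc' : (#{j ∈ A | x j = ℓ} : ℝ) ≤ #{j ∈ s | x j = ℓ} := by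
    exact_mod_cast card_le_card (filter_subset_filter _ hA)
  have hc : (#{j ∈ s | x j = ℓ} : ℝ) ≤ #{j ∈ A | x j = ℓ} + (#s - #A) := by
    have : {j ∈ s | x j = ℓ} ⊆ {j ∈ A | x j = ℓ} ∪ (s \ A) := by
      intro j hj
      by_cases hjA : j ∈ A <;> simp_all
    have := (card_le_card this).trans (card_union_le _ _)
    rw [card_sdiff_of_subset hA] at this
    rw [← Nat.cast_sub (card_le_card hA)]
    exact_mod_cast this
  have hcm : (#{j ∈ s | x j = ℓ} : ℝ) ≤ #s := by exact_mod_cast card_filter_le _ _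
  have hs : (0 : ℝ) < #s := ha.trans_le hm
  rw [lengthFreq, lengthFreq, abs_sub_le_iff, div_sub_one ha.ne']
  constructor
  · rw [div_sub_div _ _ ha.ne' hs.ne', div_le_div_iff₀ (by positivity) ha]
    nlinarith [mul_nonneg (mul_nonneg ha.le (sub_nonneg.2 hm)) (sub_nonneg.2 hcm),
      mul_nonneg (mul_nonneg ha.le hs.le) (sub_nonneg.2 hc')]
  · rw [div_sub_div _ _ hs.ne' ha.ne', div_le_div_iff₀ (by positivity) ha]
    nlinarith [mul_nonneg (mul_nonneg ha.le hs.le) (sub_nonneg.2 hc),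
      mul_nonneg (mul_nonneg ha.le (Nat.cast_nonneg' #{j ∈ s | x j = ℓ})) (sub_nonneg.2 hm)]

theorem sum_le_of_lengthFreq_le {t : ℝ} (ht : 0 ≤ t)
    (h : ∀ ℓ : ℕ, t ≤ ℓ → lengthFreq s x ℓ ≤ ((ℓ : ℝ) ^ 4)⁻¹) :
    (∑ j ∈ s, (x j : ℝ)) ≤ (t + 3) * #s := by
  rcases s.eq_empty_or_nonempty with rfl | hs
  · simp
  have hs : (0 : ℝ) < #s := by exact_mod_cast hs.card_pos
  set T := ⌈t⌉₊
  set I := Ioo T (s.sup x + 1)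
  have hshort : ∑ j ∈ s with x j ∉ I, (x j : ℝ) ≤ (t + 1) * #s := by
    calc ∑ j ∈ s with x j ∉ I, (x j : ℝ) ≤ ∑ j ∈ s with x j ∉ I, (T : ℝ) := by
          refine sum_le_sum fun j hj => ?_
          obtain ⟨hjs, hjI⟩ := mem_filter.mp hj
          have : x j < s.sup x + 1 := Nat.lt_succ_of_le (le_sup hjs)
          exact_mod_cast not_lt.mp fun hTj => hjI (mem_Ioo.mpr ⟨hTj, this⟩)
      _ ≤ #s * (t + 1) := by
          rw [sum_const, nsmul_eq_mul]
          gcongr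
          · exact filter_subset _ _
          · exact (Nat.ceil_lt_add_one ht).le
      _ = (t + 1) * #s := mul_comm _ _
  have hlong : ∑ j ∈ s with x j ∈ I, (x j : ℝ) ≤ 2 * #s := by
    rw [← sum_fiberwise_eq_sum_filter]
    calc ∑ ℓ ∈ I, ∑ j ∈ s with x j = ℓ, (x j : ℝ)
        = ∑ ℓ ∈ I, (ℓ : ℝ) * #{j ∈ s | x j = ℓ} := by
          refine sum_congr rfl fun ℓ _ => ?_
          rw [sum_congr rfl fun j hj => congrArg Nat.cast (mem_filter.mp hj).2, sum_const,
            nsmul_eq_mul, mul_comm]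
      _ ≤ ∑ ℓ ∈ I, #s * ((ℓ : ℝ) ^ 2)⁻¹ := by
          refine sum_le_sum fun ℓ hℓ => ?_
          have hTℓ : t ≤ ℓ := (Nat.le_ceil t).trans (by exact_mod_cast (mem_Ioo.mp hℓ).1.le)
          have hℓ1 : 1 ≤ ℓ := Nat.one_le_of_lt (mem_Ioo.mp hℓ).1
          have hcard := h ℓ hTℓ
          rw [lengthFreq, div_le_iff₀ hs] at hcard
          calc (ℓ : ℝ) * #{j ∈ s | x j = ℓ} ≤ ℓ * (((ℓ : ℝ) ^ 4)⁻¹ * #s) := by gcongr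
            _ = #s * ((ℓ : ℝ) ^ 2)⁻¹ * (ℓ : ℝ)⁻¹ := by field_simp
            _ ≤ #s * ((ℓ : ℝ) ^ 2)⁻¹ :=
              mul_le_of_le_one_right (by positivity)
                (inv_le_one_of_one_le₀ (by exact_mod_cast hℓ1))
      _ ≤ #s * 2 := by
          rw [← mul_sum]
          gcongr
          refine (sum_Ioo_inv_sq_le _ _).trans ?_
          rw [div_le_iff₀ (by positivity)]
          linarith [(Nat.cast_nonneg T : (0 : ℝ) ≤ T)]
      _ = 2 * #s := mul_comm _ _
  rw [← sum_filter_add_sum_filter_not s (fun j => x j ∈ I)]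
  linarith

end LengthFreq

theorem two_pow_le_rpow_of_le_log_mul {L y : ℝ} (hL : 0 < L) {ℓ : ℕ} (h : ℓ ≤ log L * y) :
    (2 : ℝ) ^ ℓ ≤ L ^ y := by
  rw [rpow_def_of_pos hL]
  calc (2 : ℝ) ^ ℓ ≤ exp 1 ^ ℓ := by gcongr; linarith [add_one_le_exp (1 : ℝ)]
    _ = exp ℓ := by rw [← exp_nat_mul, mul_one]
    _ ≤ exp (log L * y) := exp_le_exp.mpr h

theorem seventeen_le_log_of_two_le_log_log_div {k : ℕ} (hk : 2 ≤ log (log k) / 8) :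
    17 ≤ log k := by
  have hL : 0 < log k := by
    rcases (Real.log_natCast_nonneg k).eq_or_lt with h | h
    · rw [← h, log_zero] at hk; norm_num at hk
    · exact h
  have := (le_log_iff_exp_le hL).mp (by linarith : (16 : ℝ) ≤ log (log k))
  linarith [add_one_le_exp (16 : ℝ)]

theorem one_le_log_log_div_pow_mul_rpow {k : ℕ} (hM : 2 ≤ log (log k) / 8) :
    1 ≤ (log (log k) / 8) ^ 4 * log k ^ ((1 : ℝ) / 4) := by
  have hL := seventeen_le_log_of_two_le_log_log_div hM
  have : (1 : ℝ) ≤ log k ^ ((1 : ℝ) / 4) := one_le_rpow (by linarith) (by norm_num)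
  nlinarith [pow_le_pow_left₀ zero_le_two hM 4]

theorem DeltaNormal.of_subset {ι : Type*} {s A : Finset ι} {x : ι → ℕ} {k : ℕ} {δ δ' : ℝ}
    (hS : DeltaNormal k δ s x) (hδ : 0 < δ) (hδδ' : δ < δ') (hδ'1 : δ' < 1)
    (hM : 2 ≤ log (log k) / 8) (hA : A ⊆ s) (hA0 : A.Nonempty)
    (hρ : (#s : ℝ) / #A - 1 ≤
      (1 - (2 - δ') / (2 - δ)) / ((log (log k) / 8) ^ 4 * log k ^ ((1 : ℝ) / 4))) :
    DeltaNormal k δ' A x := by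
  rw [deltaNormal_iff] at hS ⊢
  obtain ⟨h1, hmid, htail⟩ := hS
  have hL := seventeen_le_log_of_two_le_log_log_div hM
  set L := log k
  set M := log L / 8 with hMdef
  set q := (2 - δ') / (2 - δ) with hq
  set ρ := (#s : ℝ) / #A - 1
  have hb' : 0 < 2 - δ' := by linarith
  have hq0 : 0 < q := div_pos (by linarith) (by linarith)
  have hq1 : q < 1 := (div_lt_one (by linarith)).mpr (by linarith)
  have hρq : ρ ≤ 1 - q :=
    hρ.trans (div_le_self (by linarith) (one_le_log_log_div_pow_mul_rpow hM))
  have hdecay : ∀ ℓ : ℕ, ℓ ≠ 0 → ∀ C : ℝ, 0 < C →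
      (C * (2 - δ) ^ ℓ)⁻¹ ≤ q * (C * (2 - δ') ^ ℓ)⁻¹ := by
    intro ℓ hℓ C hC
    have : (C * (2 - δ) ^ ℓ)⁻¹ = q ^ ℓ * (C * (2 - δ') ^ ℓ)⁻¹ := by
      have : (2 - δ) ^ ℓ ≠ 0 := pow_ne_zero _ (by linarith)
      rw [hq, div_pow]
      field_simp
    rw [this]
    exact mul_le_mul_of_nonneg_right (pow_le_of_le_one hq0.le hq1.le hℓ) (by positivity)
  refine ⟨lengthFreq_eq_zero_of_subset hA h1, fun ℓ hℓ2 hℓM => ?_, fun ℓ hMℓ => ?_⟩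
  · set D := L ^ ((1 : ℝ) / 8)
    set E' := ((ℓ : ℝ) ^ 4 * (2 - δ') ^ ℓ * D)⁻¹
    have hD : 0 < D := by positivity
    have hE : ((ℓ : ℝ) ^ 4 * (2 - δ) ^ ℓ * D)⁻¹ ≤ q * E' := by
      have := hdecay ℓ (by omega) ((ℓ : ℝ) ^ 4 * D) (by positivity)
      rwa [mul_right_comm _ D, mul_right_comm _ D] at this
    have hE' : (M ^ 4 * L ^ ((1 : ℝ) / 4))⁻¹ ≤ E' := by
      have hDD : L ^ ((1 : ℝ) / 4) = D * D := by rw [← rpow_add (by linarith)]; norm_num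
      have hbD : (2 - δ') ^ ℓ ≤ D :=
        (pow_le_pow_left₀ hb'.le (by linarith) ℓ).trans
          (two_pow_le_rpow_of_le_log_mul (by linarith) (by linarith))
      rw [hDD, ← mul_assoc]
      refine inv_anti₀ (by positivity) ?_
      gcongr
    have hρE' : ρ ≤ (1 - q) * E' :=
      hρ.trans (by rw [div_eq_mul_inv]; gcongr)
    calc |lengthFreq A x ℓ - 2 ^ (1 - (ℓ : ℤ))|
        ≤ |lengthFreq A x ℓ - lengthFreq s x ℓ| + |lengthFreq s x ℓ - 2 ^ (1 - (ℓ : ℤ))| :=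
          abs_sub_le _ _ _
      _ ≤ ρ + q * E' := add_le_add (abs_lengthFreq_sub_le_of_subset hA hA0 ℓ)
          ((hmid ℓ hℓ2 hℓM).trans hE)
      _ ≤ E' := by linarith
  · have hℓ : ℓ ≠ 0 := by rintro rfl; norm_num at hMℓ; linarith
    have hℓ4 : (0 : ℝ) < (ℓ : ℝ) ^ 4 := by positivity
    calc lengthFreq A x ℓ ≤ #s / #A * lengthFreq s x ℓ := lengthFreq_le_of_subset hA ℓ
      _ ≤ (1 + ρ) * (q * ((ℓ : ℝ) ^ 4 * (2 - δ') ^ ℓ)⁻¹) := by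
          rw [add_sub_cancel]
          gcongr
          exact (htail ℓ hMℓ).trans (hdecay ℓ hℓ _ hℓ4)
      _ ≤ ((ℓ : ℝ) ^ 4 * (2 - δ') ^ ℓ)⁻¹ := by
          rw [← mul_assoc]
          refine mul_le_of_le_one_left (by positivity) ?_
          nlinarith [mul_le_mul_of_nonneg_right hρq hq0.le]

theorem DeltaNormal.nonempty {ι : Type*} {s : Finset ι} {x : ι → ℕ} {k : ℕ} {δ : ℝ}
    (hS : DeltaNormal k δ s x) (hδ1 : δ < 1) (hM : 2 ≤ log (log k) / 8) : s.Nonempty := by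
  rw [nonempty_iff_ne_empty]
  rintro rfl
  have hL := seventeen_le_log_of_two_le_log_log_div hM
  have h2 := ((deltaNormal_iff _ _ _ _).mp hS).2.1 2 le_rfl (by exact_mod_cast hM)
  have hD : (1 : ℝ) ≤ log k ^ ((1 : ℝ) / 8) := one_le_rpow (by linarith) (by norm_num)
  have hb : (1 : ℝ) ≤ (2 - δ) ^ 2 := one_le_pow₀ (by linarith)
  have : (1 : ℝ) / 2 ≤ (16 : ℝ)⁻¹ := by
    calc (1 : ℝ) / 2 = |lengthFreq ∅ x 2 - 2 ^ (1 - ((2 : ℕ) : ℤ))| := by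
          norm_num [lengthFreq]
      _ ≤ (((2 : ℕ) : ℝ) ^ 4 * (2 - δ) ^ 2 * log k ^ ((1 : ℝ) / 8))⁻¹ := h2
      _ ≤ (16 : ℝ)⁻¹ := by
          refine inv_anti₀ (by norm_num) ?_
          norm_num
          nlinarith
  norm_num at this

theorem DeltaNormal.sum_le {ι : Type*} {s : Finset ι} {x : ι → ℕ} {k : ℕ} {δ : ℝ}
    (hS : DeltaNormal k δ s x) (hδ1 : δ ≤ 1) (hM : 0 ≤ log (log k) / 8) :
    (∑ j ∈ s, (x j : ℝ)) ≤ (log (log k) / 8 + 3) * #s := by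
  refine sum_le_of_lengthFreq_le hM fun ℓ hℓ =>
    ((deltaNormal_iff _ _ _ _).mp hS).2.2 ℓ hℓ |>.trans ?_
  rcases ℓ.eq_zero_or_pos with rfl | hℓ
  · simp
  refine inv_anti₀ (by positivity) (le_mul_of_one_le_right (by positivity) ?_)
  exact one_le_pow₀ (by linarith)

theorem log_div_eight_add_three_mul_pow_mul_rpow_le {L : ℝ} (hL : 17 ≤ L) :
    (log L / 8 + 3) * (log L / 8) ^ 4 * L ^ ((1 : ℝ) / 4) ≤ L ^ 6 := by
  have hlog : log L ≤ L - 1 := log_le_sub_one_of_pos (by linarith)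
  have hlog0 : 0 ≤ log L := log_nonneg (by linarith)
  have hroot : L ^ ((1 : ℝ) / 4) ≤ L := by
    simpa using rpow_le_rpow_of_exponent_le (by linarith : (1 : ℝ) ≤ L)
      (by norm_num : (1 : ℝ) / 4 ≤ 1)
  calc (log L / 8 + 3) * (log L / 8) ^ 4 * L ^ ((1 : ℝ) / 4) ≤ L * L ^ 4 * L := by
        gcongr <;> linarith
    _ = L ^ 6 := by ring

theorem eventually_two_mul_rpow_neg_le {α c : ℝ} (hα : 0 < α) (hc : 0 < c) :
    ∀ᶠ k : ℕ in atTop, 2 ≤ log (log k) / 8 ∧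
      2 * ((log (log k) / 8 + 3) * (k : ℝ) ^ (-α)) ≤
        c / ((log (log k) / 8) ^ 4 * log k ^ ((1 : ℝ) / 4)) := by
  have hloglog : Tendsto (fun k : ℕ => log (log k) / 8) atTop atTop :=
    ((tendsto_log_atTop.comp tendsto_log_atTop).comp tendsto_natCast_atTop_atTop).atTop_div_const
      (by norm_num)
  have hpoly : ∀ᶠ k : ℕ in atTop, log k ^ (6 : ℝ) ≤ c / 2 * (k : ℝ) ^ α := by
    filter_upwards [tendsto_natCast_atTop_atTop.eventually
      ((isLittleO_log_rpow_rpow_atTop 6 hα).bound (half_pos hc)),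
      tendsto_natCast_atTop_atTop.eventually_ge_atTop 1] with k hk hk1
    rwa [norm_of_nonneg (by positivity), norm_of_nonneg (by positivity)] at hk
  filter_upwards [hloglog.eventually_ge_atTop 2, hpoly] with k hM hk
  refine ⟨hM, ?_⟩
  have hL := seventeen_le_log_of_two_le_log_log_div hM
  have hkα : 0 < (k : ℝ) ^ α := by
    have : k ≠ 0 := by rintro rfl; norm_num at hL
    positivity
  rw [rpow_ofNat] at hk
  rw [le_div_iff₀ (by positivity), rpow_neg (Nat.cast_nonneg k)]
  calc 2 * ((log (log k) / 8 + 3) * ((k : ℝ) ^ α)⁻¹) *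
        ((log (log k) / 8) ^ 4 * log k ^ ((1 : ℝ) / 4))
      = 2 * ((log (log k) / 8 + 3) * (log (log k) / 8) ^ 4 * log k ^ ((1 : ℝ) / 4)) /
          (k : ℝ) ^ α := by ring
    _ ≤ 2 * log k ^ 6 / (k : ℝ) ^ α := by
        gcongr
        exact log_div_eight_add_three_mul_pow_mul_rpow_le hL
    _ ≤ c := by rw [div_le_iff₀ hkα]; linarith

theorem div_sub_one_le_two_mul_of_sub_le {m a η : ℝ} (hm : 0 < m) (h : m - a ≤ η * m)
    (hη0 : 0 ≤ η) (hη : η ≤ 1 / 2) : 0 < a ∧ m / a - 1 ≤ 2 * η := by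
  have ha : m / 2 ≤ a := by nlinarith
  have ha0 : 0 < a := by linarith
  refine ⟨ha0, ?_⟩
  rw [div_sub_one ha0.ne', div_le_iff₀ ha0]
  nlinarith [mul_le_mul_of_nonneg_left ha hη0]

/-- For fixed `0 < δ < δ′ < 1` and `α > 0`, there is `K` such that for all `k ≥ K`:
any subcollection of at least `m − n·k^{−α}` of the paths of a `δ`-normal collection of
`m` vertex-disjoint paths on `n` vertices in total is `δ′`-normal. -/
theorem stmt11 (δ δ' α : ℝ) (hδ : 0 < δ) (hδδ' : δ < δ') (hδ'1 : δ' < 1) (hα : 0 < α) :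
    ∃ K : ℕ, ∀ (n k : ℕ), K ≤ k → ∀ (m : ℕ) (x : Fin m → ℕ),
      (∀ j, 1 ≤ x j) → (∑ j, x j = n) →
      DeltaNormal k δ (Finset.univ : Finset (Fin m)) x →
      ∀ A : Finset (Fin m), (m : ℝ) - (n : ℝ) * (k : ℝ) ^ (-α) ≤ (A.card : ℝ) →
        DeltaNormal k δ' A x := by
  have hq0 : 0 < (2 - δ') / (2 - δ) := div_pos (by linarith) (by linarith)
  have hq : 0 < 1 - (2 - δ') / (2 - δ) :=
    sub_pos.mpr ((div_lt_one (by linarith)).mpr (by linarith))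
  obtain ⟨K, hK⟩ := eventually_atTop.mp (eventually_two_mul_rpow_neg_le hα hq)
  refine ⟨K, fun n k hk m x _ hsum hS A hA => ?_⟩
  obtain ⟨hM, hsmall⟩ := hK k hk
  set η := (log (log k) / 8 + 3) * (k : ℝ) ^ (-α)
  have hm : (0 : ℝ) < m := by simpa using (hS.nonempty (by linarith) hM).card_pos
  have hn : (n : ℝ) ≤ (log (log k) / 8 + 3) * m := by
    simpa [← hsum] using hS.sum_le (by linarith) (by linarith)
  have hgap : (m : ℝ) - #A ≤ η * m :=
    calc (m : ℝ) - #A ≤ n * (k : ℝ) ^ (-α) := by linarith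
      _ ≤ (log (log k) / 8 + 3) * m * (k : ℝ) ^ (-α) := by gcongr
      _ = η * m := by ring
  have hη : 2 * η ≤ 1 :=
    hsmall.trans (div_le_one_of_le₀ (by linarith [one_le_log_log_div_pow_mul_rpow hM])
      (by linarith [one_le_log_log_div_pow_mul_rpow hM]))
  obtain ⟨hA0, hρ⟩ := div_sub_one_le_two_mul_of_sub_le hm hgap (by positivity) (by linarith)
  exact hS.of_subset hδ hδδ' hδ'1 hM (subset_univ A) (card_pos.mp (by exact_mod_cast hA0))
    (by simpa using hρ.trans hsmall)
end
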